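/- arXiv:1508.02157 — 7 statements merged into one kernel-verified Lean document; each statement's English description precedes it below -/
import Mathlib

section
/- Let f : 2^N → ℝ be submodular, let u ∈ N, let J be a finite index set, and for each j ∈ J let X_j ⊆ Y_j ⊆ N with u ∈ Y_j \ X_j, and let p_j ≥ 0 with Σ_{j∈J} p_j = 1. Set a_j = f(X_j ∪ {u}) − f(X_j) and b_j = f(Y_j \ {u}) − f(Y_j), and define z_j = max{0,a_j} / (max{0,a_j} + max{0,b_j}) when the denominator is nonzero and z_j = 1 otherwise, and w_j = 1 − z_j. Then Σ_j p_j (z_j a_j + w_j b_j) ≥ 2 Σ_j p_j z_j b_j and Σ_j p_j (z_j a_j + w_j b_j) ≥ 2 Σ_j p_j w_j a_j. -/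
/-!
Submodularity applied to `A = X_j ∪ {u}` and `B = Y_j \ {u}` (so `A ∩ B = X_j`, `A ∪ B = Y_j`)
gives `a_j + b_j ≥ 0`. Given that, both constraints hold term by term: if one of `a_j, b_j` is
nonpositive the canonical assignment puts all weight on the other, and if both are positive
then `z_j = a_j / (a_j + b_j)`, `w_j = b_j / (a_j + b_j)` and both constraints reduce to
`2 a_j b_j ≤ a_j ^ 2 + b_j ^ 2`.
-/

open Finset

section Submodular

variable {α : Type*} [DecidableEq α] {X Y : Finset α} {u : α}

lemma insert_inter_erase_eq (hXY : X ⊆ Y) (hu : u ∉ X) : insert u X ∩ Y.erase u = X := by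
  ext x
  simp only [mem_inter, mem_insert, mem_erase]
  grind

lemma insert_union_erase_eq (hXY : X ⊆ Y) (hu : u ∈ Y) : insert u X ∪ Y.erase u = Y := by
  rw [insert_union, ← union_insert, insert_erase hu, union_eq_right.mpr hXY]

lemma marginal_insert_add_marginal_erase_nonneg (f : Finset α → ℝ)
    (hsub : ∀ A B : Finset α, f (A ∩ B) + f (A ∪ B) ≤ f A + f B)
    (hXY : X ⊆ Y) (hu : u ∈ Y \ X) :
    0 ≤ (f (insert u X) - f X) + (f (Y.erase u) - f Y) := by
  obtain ⟨huY, huX⟩ := mem_sdiff.mp hu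
  have h := hsub (insert u X) (Y.erase u)
  rw [insert_inter_erase_eq hXY huX, insert_union_erase_eq hXY huY] at h
  linarith

end Submodular

section CanonicalShare

noncomputable def canonicalShare (a b : ℝ) : ℝ :=
  if max 0 a + max 0 b ≠ 0 then max 0 a / (max 0 a + max 0 b) else 1

variable {a b : ℝ}

lemma canonicalShare_of_nonpos_of_pos (ha : a ≤ 0) (hb : 0 < b) : canonicalShare a b = 0 := by
  simp [canonicalShare, max_eq_left ha, max_eq_right hb.le, hb.ne']

lemma canonicalShare_of_pos_of_nonpos (ha : 0 < a) (hb : b ≤ 0) : canonicalShare a b = 1 := by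
  simp [canonicalShare, max_eq_right ha.le, max_eq_left hb, ha.ne']

lemma canonicalShare_of_pos (ha : 0 < a) (hb : 0 < b) : canonicalShare a b = a / (a + b) := by
  have hab : a + b ≠ 0 := by positivity
  simp [canonicalShare, max_eq_right ha.le, max_eq_right hb.le, hab]

lemma canonicalShare_feasible (hab : 0 ≤ a + b) :
    2 * (canonicalShare a b * b) ≤ canonicalShare a b * a + (1 - canonicalShare a b) * b ∧
    2 * ((1 - canonicalShare a b) * a) ≤ canonicalShare a b * a + (1 - canonicalShare a b) * b := by
  rcases le_or_gt a 0 with ha | ha <;> rcases le_or_gt b 0 with hb | hb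
  · obtain ⟨rfl, rfl⟩ : a = 0 ∧ b = 0 := ⟨by linarith, by linarith⟩
    simp
  · rw [canonicalShare_of_nonpos_of_pos ha hb]
    constructor <;> linarith
  · rw [canonicalShare_of_pos_of_nonpos ha hb]
    constructor <;> linarith
  · rw [canonicalShare_of_pos ha hb]
    have hab' : 0 < a + b := by positivity
    constructor <;>
    · field_simp
      nlinarith [sq_nonneg (a - b)]

end CanonicalShare

lemma two_mul_weighted_sum_le {J : Type*} [Fintype J] {p x y : J → ℝ} (hp : ∀ j, 0 ≤ p j)
    (hxy : ∀ j, 2 * x j ≤ y j) : 2 * ∑ j, p j * x j ≤ ∑ j, p j * y j := by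
  rw [mul_sum]
  exact sum_le_sum fun j _ => by nlinarith [hp j, hxy j]

theorem canonical_assignment_feasible_general {N J : Type*} [DecidableEq N] [Fintype J]
    (f : Finset N → ℝ)
    (hsub : ∀ A B : Finset N, f (A ∩ B) + f (A ∪ B) ≤ f A + f B)
    (u : N) (X Y : J → Finset N) (p : J → ℝ)
    (hXY : ∀ j, X j ⊆ Y j) (hu : ∀ j, u ∈ Y j \ X j)
    (hp : ∀ j, 0 ≤ p j)
    (a b z w : J → ℝ)
    (ha : ∀ j, a j = f (insert u (X j)) - f (X j))
    (hb : ∀ j, b j = f ((Y j).erase u) - f (Y j))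
    (hz : ∀ j, z j = if max 0 (a j) + max 0 (b j) ≠ 0 then
      max 0 (a j) / (max 0 (a j) + max 0 (b j)) else 1)
    (hw : ∀ j, w j = 1 - z j) :
    (∑ j, p j * (z j * a j + w j * b j) ≥ 2 * ∑ j, p j * (z j * b j)) ∧
    (∑ j, p j * (z j * a j + w j * b j) ≥ 2 * ∑ j, p j * (w j * a j)) := by
  have hab : ∀ j, 0 ≤ a j + b j := fun j => by
    rw [ha, hb]
    exact marginal_insert_add_marginal_erase_nonneg f hsub (hXY j) (hu j)
  have hz' : ∀ j, z j = canonicalShare (a j) (b j) := hz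
  simp only [hw, hz']
  exact ⟨two_mul_weighted_sum_le hp fun j => (canonicalShare_feasible (hab j)).1,
    two_mul_weighted_sum_le hp fun j => (canonicalShare_feasible (hab j)).2⟩

/-- The canonical fractional assignment `z_j, w_j` built from the marginals
`a_j, b_j` satisfies both constraints of the linear formulation `(P)`. -/
theorem canonical_assignment_feasible {N J : Type*} [Fintype N] [DecidableEq N] [Fintype J]
    (f : Finset N → ℝ)
    (hsub : ∀ A B : Finset N, f (A ∩ B) + f (A ∪ B) ≤ f A + f B)
    (u : N) (X Y : J → Finset N) (p : J → ℝ)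
    (hXY : ∀ j, X j ⊆ Y j) (hu : ∀ j, u ∈ Y j \ X j)
    (hp : ∀ j, 0 ≤ p j) (hp1 : ∑ j, p j = 1)
    (a b z w : J → ℝ)
    (ha : ∀ j, a j = f (insert u (X j)) - f (X j))
    (hb : ∀ j, b j = f ((Y j).erase u) - f (Y j))
    (hz : ∀ j, z j = if max 0 (a j) + max 0 (b j) ≠ 0 then
      max 0 (a j) / (max 0 (a j) + max 0 (b j)) else 1)
    (hw : ∀ j, w j = 1 - z j) :
    (∑ j, p j * (z j * a j + w j * b j) ≥ 2 * ∑ j, p j * (z j * b j)) ∧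
    (∑ j, p j * (z j * a j + w j * b j) ≥ 2 * ∑ j, p j * (w j * a j)) :=
  canonical_assignment_feasible_general f hsub u X Y p hXY hu hp a b z w ha hb hz hw
end

section
/- Let f : 2^N → ℝ be submodular, let OPT ⊆ N, let u ∈ N, let J be a finite index set, and for each j ∈ J let X_j ⊆ Y_j ⊆ N with u ∈ Y_j \ X_j, let p_j ≥ 0 with Σ_j p_j = 1, and let z_j, w_j ≥ 0 with z_j + w_j = 1. Set a_j = f(X_j ∪ {u}) − f(X_j) and b_j = f(Y_j \ {u}) − f(Y_j), and assume Σ_j p_j (z_j a_j + w_j b_j) ≥ 2 Σ_j p_j z_j b_j and Σ_j p_j (z_j a_j + w_j b_j) ≥ 2 Σ_j p_j w_j a_j. Writing OPT(X,Y) = (OPT ∪ X) ∩ Y, we have: Σ_j p_j [ z_j (f(X_j ∪ {u}) + f(Y_j)) + w_j (f(X_j) + f(Y_j \ {u})) ] − Σ_j p_j [ f(X_j) + f(Y_j) ] ≥ 2 ( Σ_j p_j f(OPT(X_j, Y_j)) − Σ_j p_j [ z_j f(OPT(X_j ∪ {u}, Y_j)) + w_j f(OPT(X_j, Y_j \ {u}))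 ] ). -/
/-- Main lemma for the unconstrained algorithm: the change in the expected value of
`f(X) + f(Y)` is at least twice the loss in the expected value of `f(OPT(X,Y))`. -/
theorem main_lemma_unconstrained {N J : Type*} [Fintype N] [DecidableEq N] [Fintype J]
    (f : Finset N → ℝ)
    (hsub : ∀ A B : Finset N, f (A ∩ B) + f (A ∪ B) ≤ f A + f B)
    (OPT : Finset N) (u : N) (X Y : J → Finset N) (p z w : J → ℝ)
    (hXY : ∀ j, X j ⊆ Y j) (hu : ∀ j, u ∈ Y j \ X j)
    (hp : ∀ j, 0 ≤ p j) (hp1 : ∑ j, p j = 1)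
    (hz : ∀ j, 0 ≤ z j) (hw : ∀ j, 0 ≤ w j) (hzw : ∀ j, z j + w j = 1)
    (a b : J → ℝ)
    (ha : ∀ j, a j = f (insert u (X j)) - f (X j))
    (hb : ∀ j, b j = f ((Y j).erase u) - f (Y j))
    (h1 : ∑ j, p j * (z j * a j + w j * b j) ≥ 2 * ∑ j, p j * (z j * b j))
    (h2 : ∑ j, p j * (z j * a j + w j * b j) ≥ 2 * ∑ j, p j * (w j * a j)) :
    (∑ j, p j * (z j * (f (insert u (X j)) + f (Y j))
        + w j * (f (X j) + f ((Y j).erase u))))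
      - ∑ j, p j * (f (X j) + f (Y j))
    ≥ 2 * ((∑ j, p j * f ((OPT ∪ X j) ∩ Y j))
      - ∑ j, p j * (z j * f ((OPT ∪ insert u (X j)) ∩ Y j)
        + w j * f ((OPT ∪ X j) ∩ ((Y j).erase u)))) := by
  -- marginal lemma from submodularity
  have marg : ∀ S T : Finset N, S ⊆ T → u ∉ T →
      f (insert u T) - f T ≤ f (insert u S) - f S := by
    intro S T hST huT
    have h := hsub (insert u S) T
    have e1 : insert u S ∩ T = S := by
      ext x
      simp only [Finset.mem_inter, Finset.mem_insert]
      constructor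
      · rintro ⟨h1 | h1, h2⟩
        · exact absurd (h1 ▸ h2) huT
        · exact h1
      · intro hx; exact ⟨Or.inr hx, hST hx⟩
    have e2 : insert u S ∪ T = insert u T := by
      rw [Finset.insert_union, Finset.union_eq_right.mpr hST]
    rw [e1, e2] at h
    linarith
  -- LHS simplification
  have hLHS : (∑ j, p j * (z j * (f (insert u (X j)) + f (Y j))
        + w j * (f (X j) + f ((Y j).erase u))))
      - ∑ j, p j * (f (X j) + f (Y j)) = ∑ j, p j * (z j * a j + w j * b j) := by
    rw [← Finset.sum_sub_distrib]
    refine Finset.sum_congr rfl fun j _ => ?_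
    have hw' : w j = 1 - z j := by linarith [hzw j]
    rw [ha j, hb j, hw']; ring
  rw [hLHS]
  by_cases hO : u ∈ OPT
  · -- u ∈ OPT : each term loss ≤ p w a
    have key : ∀ j, p j * (f ((OPT ∪ X j) ∩ Y j)
        - (z j * f ((OPT ∪ insert u (X j)) ∩ Y j)
          + w j * f ((OPT ∪ X j) ∩ ((Y j).erase u))))
        ≤ p j * (w j * a j) := by
      intro j
      have huY : u ∈ Y j := (Finset.mem_sdiff.mp (hu j)).1
      have huX : u ∉ X j := (Finset.mem_sdiff.mp (hu j)).2
      have e1 : (OPT ∪ insert u (X j)) ∩ Y j = (OPT ∪ X j) ∩ Y j := by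
        ext x
        simp only [Finset.mem_inter, Finset.mem_union, Finset.mem_insert]
        constructor
        · rintro ⟨h1 | (h1 | h1), h2⟩
          · exact ⟨Or.inl h1, h2⟩
          · exact ⟨Or.inl (h1 ▸ hO), h2⟩
          · exact ⟨Or.inr h1, h2⟩
        · rintro ⟨h1 | h1, h2⟩
          · exact ⟨Or.inl h1, h2⟩
          · exact ⟨Or.inr (Or.inr h1), h2⟩
      have e2 : (OPT ∪ X j) ∩ ((Y j).erase u) = ((OPT ∪ X j) ∩ Y j).erase u := by
        ext x
        simp only [Finset.mem_inter, Finset.mem_erase]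
        tauto
      have huO : u ∈ (OPT ∪ X j) ∩ Y j := by
        simp only [Finset.mem_inter, Finset.mem_union]
        exact ⟨Or.inl hO, huY⟩
      have hXsub : X j ⊆ ((OPT ∪ X j) ∩ Y j).erase u := by
        intro x hx
        simp only [Finset.mem_erase, Finset.mem_inter, Finset.mem_union]
        exact ⟨fun hxu => huX (hxu ▸ hx), Or.inr hx, hXY j hx⟩
      have hins : insert u (((OPT ∪ X j) ∩ Y j).erase u) = (OPT ∪ X j) ∩ Y j :=
        Finset.insert_erase huO
      have hm := marg (X j) (((OPT ∪ X j) ∩ Y j).erase u) hXsub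
        (Finset.notMem_erase u _)
      rw [hins] at hm
      rw [ha j] at *
      apply mul_le_mul_of_nonneg_left _ (hp j)
      rw [e1, e2]
      have h0 : z j * f ((OPT ∪ X j) ∩ Y j) + w j * f ((OPT ∪ X j) ∩ Y j)
          = f ((OPT ∪ X j) ∩ Y j) := by
        linear_combination f ((OPT ∪ X j) ∩ Y j) * hzw j
      linarith [mul_le_mul_of_nonneg_left hm (hw j)]
    have hsum := Finset.sum_le_sum (s := Finset.univ) (fun j _ => key j)
    rw [Finset.sum_congr rfl (fun j _ => mul_sub (p j) _ _),
      Finset.sum_sub_distrib] at hsum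
    linarith
  · -- u ∉ OPT : each term loss ≤ p z b
    have key : ∀ j, p j * (f ((OPT ∪ X j) ∩ Y j)
        - (z j * f ((OPT ∪ insert u (X j)) ∩ Y j)
          + w j * f ((OPT ∪ X j) ∩ ((Y j).erase u))))
        ≤ p j * (z j * b j) := by
      intro j
      have huY : u ∈ Y j := (Finset.mem_sdiff.mp (hu j)).1
      have huX : u ∉ X j := (Finset.mem_sdiff.mp (hu j)).2
      have e1 : (OPT ∪ insert u (X j)) ∩ Y j = insert u ((OPT ∪ X j) ∩ Y j) := by
        ext x
        simp only [Finset.mem_inter, Finset.mem_union, Finset.mem_insert]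
        constructor
        · rintro ⟨h1 | (h1 | h1), h2⟩
          · exact Or.inr ⟨Or.inl h1, h2⟩
          · exact Or.inl h1
          · exact Or.inr ⟨Or.inr h1, h2⟩
        · rintro (h1 | ⟨h1 | h1, h2⟩)
          · exact ⟨Or.inr (Or.inl h1), h1 ▸ huY⟩
          · exact ⟨Or.inl h1, h2⟩
          · exact ⟨Or.inr (Or.inr h1), h2⟩
      have e2 : (OPT ∪ X j) ∩ ((Y j).erase u) = (OPT ∪ X j) ∩ Y j := by
        ext x
        simp only [Finset.mem_inter, Finset.mem_erase, Finset.mem_union]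
        constructor
        · rintro ⟨h1, h2, h3⟩; exact ⟨h1, h3⟩
        · rintro ⟨h1, h2⟩
          refine ⟨h1, fun hxu => ?_, h2⟩
          rcases h1 with h1 | h1
          · exact hO (hxu ▸ h1)
          · exact huX (hxu ▸ h1)
      have hOsub : (OPT ∪ X j) ∩ Y j ⊆ (Y j).erase u := by
        intro x hx
        simp only [Finset.mem_inter, Finset.mem_union] at hx
        simp only [Finset.mem_erase]
        refine ⟨fun hxu => ?_, hx.2⟩
        rcases hx.1 with h1 | h1
        · exact hO (hxu ▸ h1)
        · exact huX (hxu ▸ h1)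
      have hm := marg ((OPT ∪ X j) ∩ Y j) ((Y j).erase u) hOsub
        (Finset.notMem_erase u _)
      rw [Finset.insert_erase huY] at hm
      rw [hb j] at *
      apply mul_le_mul_of_nonneg_left _ (hp j)
      rw [e1, e2]
      have h0 : z j * f ((OPT ∪ X j) ∩ Y j) + w j * f ((OPT ∪ X j) ∩ Y j)
          = f ((OPT ∪ X j) ∩ Y j) := by
        linear_combination f ((OPT ∪ X j) ∩ Y j) * hzw j
      linarith [mul_le_mul_of_nonneg_left hm (hz j)]
    have hsum := Finset.sum_le_sum (s := Finset.univ) (fun j _ => key j)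
    rw [Finset.sum_congr rfl (fun j _ => mul_sub (p j) _ _),
      Finset.sum_sub_distrib] at hsum
    linarith
end

section
/- Let f : 2^N → ℝ be a nonnegative submodular function, let T ⊆ N, and let p be a distribution over subsets of N. Then Σ_S p(S) f(T ∪ S) ≥ f(T) · min_{u ∈ N} Pr_{S∼p}[u ∉ S]. -/
open Finset

lemma aux_expected {N : Type*} [Fintype N] [DecidableEq N]
    (p : Finset N → ℝ) (hp : ∀ S, 0 ≤ p S) (hp1 : ∑ S : Finset N, p S = 1) :
    ∀ (n : ℕ) (M : Finset N), M.card = n →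
      ∀ (g : Finset N → ℝ),
        (∀ A B : Finset N, g (A ∩ B) + g (A ∪ B) ≤ g A + g B) →
        (∀ S, 0 ≤ g S) →
        (∀ A, g A = g (A ∩ M)) →
        ∀ q : ℝ, 0 ≤ q → q ≤ 1 →
          (∀ u ∈ M, q ≤ ∑ S ∈ univ.filter (fun S : Finset N => u ∉ S), p S) →
          q * g ∅ ≤ ∑ S : Finset N, p S * g S := by
  intro n
  induction n with
  | zero =>
    intro M hM g hsub hnn hsupp q hq0 hq1 _
    have hM0 : M = ∅ := card_eq_zero.mp hM
    have hconst : ∀ S : Finset N, g S = g ∅ := by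
      intro S
      rw [hsupp S, hM0, inter_empty]
    have h1 : ∑ S : Finset N, p S * g S = g ∅ := by
      calc ∑ S : Finset N, p S * g S = ∑ S : Finset N, p S * g ∅ :=
            Finset.sum_congr rfl (fun S _ => by rw [hconst S])
        _ = (∑ S : Finset N, p S) * g ∅ := by rw [Finset.sum_mul]
        _ = g ∅ := by rw [hp1, one_mul]
    rw [h1]
    nlinarith [hnn (∅ : Finset N)]
  | succ n ih =>
    intro M hM g hsub hnn hsupp q hq0 hq1 hqle
    have hMne : M.Nonempty := card_pos.mp (by omega)
    obtain ⟨u, huM, humin⟩ := M.exists_min_image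
      (fun u => ∑ S ∈ univ.filter (fun S : Finset N => u ∉ S), p S) hMne
    set q' : ℝ := ∑ S ∈ univ.filter (fun S : Finset N => u ∉ S), p S with hq'def
    have hq'0 : 0 ≤ q' := Finset.sum_nonneg (fun S _ => hp S)
    have hq'1 : q' ≤ 1 := by
      rw [← hp1]
      exact Finset.sum_le_sum_of_subset_of_nonneg (filter_subset _ _)
        (fun S _ _ => hp S)
    -- the shifted function
    set h : Finset N → ℝ := fun A => g (A ∪ {u}) with hhdef
    have hhsub : ∀ A B : Finset N, h (A ∩ B) + h (A ∪ B) ≤ h A + h B := by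
      intro A B
      have e1 : (A ∩ B) ∪ {u} = (A ∪ {u}) ∩ (B ∪ {u}) := by
        ext x; simp only [mem_union, mem_inter, mem_singleton]; tauto
      have e2 : (A ∪ B) ∪ {u} = (A ∪ {u}) ∪ (B ∪ {u}) := by
        ext x; simp only [mem_union, mem_singleton]; tauto
      have := hsub (A ∪ {u}) (B ∪ {u})
      simp only [hhdef, e1, e2]
      linarith
    have hhnn : ∀ S, 0 ≤ h S := fun S => hnn _
    have hhsupp : ∀ A, h A = h (A ∩ (M.erase u)) := by
      intro A
      simp only [hhdef]
      rw [hsupp (A ∪ {u}), hsupp ((A ∩ M.erase u) ∪ {u})]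
      congr 1
      ext x
      simp only [mem_inter, mem_union, mem_singleton, mem_erase]
      tauto
    have hcard : (M.erase u).card = n := by
      rw [card_erase_of_mem huM, hM]
      omega
    have hq'le : ∀ v ∈ M.erase u, q' ≤ ∑ S ∈ univ.filter (fun S : Finset N => v ∉ S), p S :=
      fun v hv => humin v (mem_of_mem_erase hv)
    have hIH : q' * h ∅ ≤ ∑ S : Finset N, p S * h S :=
      ih (M.erase u) hcard h hhsub hhnn hhsupp q' hq'0 hq'1 hq'le
    have hempty : h ∅ = g {u} := by simp [hhdef]
    -- pointwise lower bound on g S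
    have hpt : ∀ S : Finset N,
        p S * ((if u ∈ S then 0 else g ∅ - g {u}) + h S) ≤ p S * g S := by
      intro S
      apply mul_le_mul_of_nonneg_left _ (hp S)
      by_cases huS : u ∈ S
      · simp only [if_pos huS, zero_add, hhdef]
        have : S ∪ {u} = S := by
          ext x; simp only [mem_union, mem_singleton]
          constructor
          · rintro (hx | rfl); exact hx; exact huS
          · exact Or.inl
        rw [this]
      · simp only [if_neg huS, hhdef]
        have hmeet : S ∩ {u} = ∅ := by
          ext x; simp only [mem_inter, mem_singleton, notMem_empty, iff_false]
          rintro ⟨hx, rfl⟩; exact huS hx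
        have := hsub S {u}
        rw [hmeet] at this
        linarith
    have hsplit : ∑ S : Finset N, p S * ((if u ∈ S then 0 else g ∅ - g {u}) + h S)
        = q' * (g ∅ - g {u}) + ∑ S : Finset N, p S * h S := by
      have e3 : ∀ S : Finset N,
          p S * ((if u ∈ S then 0 else g ∅ - g {u}) + h S)
          = (if u ∉ S then p S * (g ∅ - g {u}) else 0) + p S * h S := by
        intro S
        by_cases huS : u ∈ S <;> simp [huS] <;> ring
      rw [Finset.sum_congr rfl (fun S _ => e3 S), Finset.sum_add_distrib]
      congr 1
      rw [← Finset.sum_filter, ← Finset.sum_mul]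
    have hmain : q' * g ∅ ≤ ∑ S : Finset N, p S * g S := by
      have h1 : q' * (g ∅ - g {u}) + q' * h ∅ ≤ ∑ S : Finset N, p S * g S := by
        calc q' * (g ∅ - g {u}) + q' * h ∅
            ≤ q' * (g ∅ - g {u}) + ∑ S : Finset N, p S * h S := by linarith
          _ = ∑ S : Finset N, p S * ((if u ∈ S then 0 else g ∅ - g {u}) + h S) :=
              hsplit.symm
          _ ≤ ∑ S : Finset N, p S * g S := Finset.sum_le_sum (fun S _ => hpt S)
      rw [hempty] at h1
      linarith [h1]
    calc q * g ∅ ≤ q' * g ∅ :=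
          mul_le_mul_of_nonneg_right (hqle u huM) (hnn ∅)
      _ ≤ ∑ S : Finset N, p S * g S := hmain

/-- For a nonnegative submodular `f`, a set `T` and a distribution `p` over subsets,
`E_{S∼p}[f(T ∪ S)] ≥ f(T) · min_u Pr_{S∼p}[u ∉ S]`. -/
theorem expected_union_ge {N : Type*} [Fintype N] [DecidableEq N] [Nonempty N]
    (f : Finset N → ℝ)
    (hsub : ∀ A B : Finset N, f (A ∩ B) + f (A ∪ B) ≤ f A + f B)
    (hnonneg : ∀ S : Finset N, 0 ≤ f S)
    (T : Finset N) (p : Finset N → ℝ)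
    (hp : ∀ S, 0 ≤ p S) (hp1 : ∑ S : Finset N, p S = 1) :
    ∑ S : Finset N, p S * f (T ∪ S)
      ≥ f T * Finset.univ.inf' Finset.univ_nonempty
          (fun u : N => ∑ S ∈ Finset.univ.filter (fun S : Finset N => u ∉ S), p S) := by
  set q : ℝ := Finset.univ.inf' Finset.univ_nonempty
      (fun u : N => ∑ S ∈ Finset.univ.filter (fun S : Finset N => u ∉ S), p S) with hqdef
  set g : Finset N → ℝ := fun S => f (T ∪ S) with hgdef
  have hgsub : ∀ A B : Finset N, g (A ∩ B) + g (A ∪ B) ≤ g A + g B := by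
    intro A B
    have e1 : T ∪ (A ∩ B) = (T ∪ A) ∩ (T ∪ B) := by
      ext x; simp only [mem_union, mem_inter]; tauto
    have e2 : T ∪ (A ∪ B) = (T ∪ A) ∪ (T ∪ B) := by
      ext x; simp only [mem_union]; tauto
    have := hsub (T ∪ A) (T ∪ B)
    simp only [hgdef, e1, e2]
    linarith
  have hgnn : ∀ S, 0 ≤ g S := fun S => hnonneg _
  have hgsupp : ∀ A : Finset N, g A = g (A ∩ (univ : Finset N)) := by
    intro A; rw [inter_univ]
  have hq0 : 0 ≤ q := by
    apply Finset.le_inf'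
    intro u _
    exact Finset.sum_nonneg (fun S _ => hp S)
  have hq1 : q ≤ 1 := by
    obtain ⟨u⟩ := ‹Nonempty N›
    calc q ≤ ∑ S ∈ univ.filter (fun S : Finset N => u ∉ S), p S :=
          Finset.inf'_le _ (mem_univ u)
      _ ≤ ∑ S : Finset N, p S :=
          Finset.sum_le_sum_of_subset_of_nonneg (filter_subset _ _) (fun S _ _ => hp S)
      _ = 1 := hp1
  have hqle : ∀ u ∈ (univ : Finset N),
      q ≤ ∑ S ∈ univ.filter (fun S : Finset N => u ∉ S), p S :=
    fun u hu => Finset.inf'_le _ hu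
  have := aux_expected p hp hp1 (Fintype.card N) univ (by simp) g hgsub hgnn hgsupp
    q hq0 hq1 hqle
  have hge : g ∅ = f T := by simp [hgdef]
  rw [hge] at this
  calc f T * q = q * f T := mul_comm _ _
    _ ≤ ∑ S : Finset N, p S * g S := this
    _ = ∑ S : Finset N, p S * f (T ∪ S) := rfl
end

section
/- Let f : 2^N → ℝ be submodular, let k ≥ 1 be an integer, let p be a distribution over subsets of N, let OPT ⊆ N with |OPT| ≤ k, and let M ⊆ N with |M| ≤ k be such that Σ_{u∈M} E_{S∼p}[f(S ∪ {u}) − f(S)] ≥ Σ_{u∈T} E_{S∼p}[f(S ∪ {u}) − f(S)] for every T ⊆ N with |T| ≤ k. Then Σ_{u∈M} E_{S∼p}[f(S ∪ {u}) − f(S)] ≥ E_{S∼p}[f(OPT ∪ S) − f(S)]. -/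
lemma submod_union_le {N : Type*} [DecidableEq N]
    (f : Finset N → ℝ)
    (hsub : ∀ A B : Finset N, f (A ∩ B) + f (A ∪ B) ≤ f A + f B)
    (A S : Finset N) :
    f (A ∪ S) - f S ≤ ∑ u ∈ A, (f (insert u S) - f S) := by
  induction A using Finset.induction_on with
  | empty => simp
  | @insert a A' ha ih =>
    rw [Finset.sum_insert ha]
    by_cases haS : a ∈ S
    · have h1 : insert a A' ∪ S = A' ∪ S := by
        ext x; simp only [Finset.mem_union, Finset.mem_insert]
        constructor
        · rintro (⟨rfl | h⟩ | h) <;> simp_all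
        · rintro (h | h) <;> simp_all
      have h2 : insert a S = S := Finset.insert_eq_self.mpr haS
      rw [h1, h2]; linarith
    · have hint : (A' ∪ S) ∩ insert a S = S := by
        ext x
        simp only [Finset.mem_inter, Finset.mem_union, Finset.mem_insert]
        constructor
        · rintro ⟨h1 | h1, rfl | h2⟩ <;> simp_all
        · intro h; exact ⟨Or.inr h, Or.inr h⟩
      have huni : (A' ∪ S) ∪ insert a S = insert a A' ∪ S := by
        ext x
        simp only [Finset.mem_union, Finset.mem_insert]
        tauto
      have := hsub (A' ∪ S) (insert a S)
      rw [hint, huni] at this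
      linarith

/-- If `M` maximizes the total expected marginal value among sets of size at most `k`,
then its total expected marginal value is at least `E_{S∼p}[f (OPT ∪ S) − f(S)]`. -/
theorem greedy_set_beats_opt {N : Type*} [Fintype N] [DecidableEq N]
    (f : Finset N → ℝ)
    (hsub : ∀ A B : Finset N, f (A ∩ B) + f (A ∪ B) ≤ f A + f B)
    (k : ℕ) (hk : 1 ≤ k)
    (p : Finset N → ℝ) (hp : ∀ S, 0 ≤ p S) (hp1 : ∑ S : Finset N, p S = 1)
    (OPT : Finset N) (hOPT : OPT.card ≤ k)
    (M : Finset N) (hMcard : M.card ≤ k)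
    (hM : ∀ T : Finset N, T.card ≤ k →
      ∑ u ∈ M, ∑ S : Finset N, p S * (f (insert u S) - f S)
        ≥ ∑ u ∈ T, ∑ S : Finset N, p S * (f (insert u S) - f S)) :
    ∑ u ∈ M, ∑ S : Finset N, p S * (f (insert u S) - f S)
      ≥ ∑ S : Finset N, p S * (f (OPT ∪ S) - f S) := by
  refine le_trans ?_ (hM OPT hOPT)
  rw [Finset.sum_comm]
  apply Finset.sum_le_sum
  intro S _
  rw [← Finset.mul_sum]
  exact mul_le_mul_of_nonneg_left (submod_union_le f hsub OPT S) (hp S)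
end

section
/- Let k ≥ 1 be an integer, let V ≥ 0 be a real number, and let e_0, e_1, …, e_k be real numbers with e_0 ≥ 0 and e_i ≥ e_{i−1} + (1/k)·((1 − 1/k)^{i−1}·V − e_{i−1}) for every 1 ≤ i ≤ k. Then e_i ≥ (i/k)·(1 − 1/k)^{i−1}·V for every 0 ≤ i ≤ k. -/
/-!
With `c = 1 - 1/k` the recurrence reads `e (i+1) ≥ c · e i + (V/k) · c^i`. Since `c ≥ 0`, the bound
`e i ≥ i · (V/k) · c^(i-1)` propagates by induction, because `c · i c^(i-1) + c^i = (i+1) c^i`.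
-/

theorem nat_mul_mul_pow_pred_le_of_le_mul_add {b c : ℝ} (hc : 0 ≤ c) {e : ℕ → ℝ} {n : ℕ}
    (h0 : 0 ≤ e 0) (hrec : ∀ i < n, c * e i + b * c ^ i ≤ e (i + 1)) :
    ∀ i ≤ n, i * b * c ^ (i - 1) ≤ e i := by
  intro i
  induction i with
  | zero => simpa using h0
  | succ i ih =>
    intro hi
    have hpow : ((i + 1 : ℕ) : ℝ) * b * c ^ (i + 1 - 1) = c * (i * b * c ^ (i - 1)) + b * c ^ i := by
      rcases i with _ | i
      · simp
      · simp only [Nat.add_sub_cancel]; push_cast; ring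
    calc ((i + 1 : ℕ) : ℝ) * b * c ^ (i + 1 - 1)
        = c * (i * b * c ^ (i - 1)) + b * c ^ i := hpow
      _ ≤ c * e i + b * c ^ i := by gcongr; exact ih (by omega)
      _ ≤ e (i + 1) := hrec i (by omega)

theorem recurrence_bound_general (k : ℕ) (V : ℝ)
    (e : ℕ → ℝ) (h0 : 0 ≤ e 0)
    (hrec : ∀ i : ℕ, 1 ≤ i → i ≤ k →
      e i ≥ e (i - 1) + (1 / (k : ℝ)) * ((1 - 1 / (k : ℝ)) ^ (i - 1) * V - e (i - 1))) :
    ∀ i : ℕ, i ≤ k → e i ≥ ((i : ℝ) / (k : ℝ)) * (1 - 1 / (k : ℝ)) ^ (i - 1) * V := by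
  intro i hi
  have hc : 0 ≤ 1 - 1 / (k : ℝ) := sub_nonneg.2 (by simpa using Nat.cast_inv_le_one (α := ℝ) k)
  have hstep : ∀ j < k,
      (1 - 1 / (k : ℝ)) * e j + V / k * (1 - 1 / (k : ℝ)) ^ j ≤ e (j + 1) := by
    intro j hj
    have h := hrec (j + 1) (by omega) hj
    rw [Nat.add_sub_cancel] at h
    linear_combination h
  have hbound := nat_mul_mul_pow_pred_le_of_le_mul_add hc h0 hstep i hi
  calc ((i : ℝ) / k) * (1 - 1 / (k : ℝ)) ^ (i - 1) * V
      = i * (V / k) * (1 - 1 / (k : ℝ)) ^ (i - 1) := by ring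
    _ ≤ e i := hbound

/-- The recurrence `e_i ≥ e_{i-1} + (1/k)·((1 − 1/k)^{i-1}·V − e_{i-1})` with `e_0 ≥ 0`
implies `e_i ≥ (i/k)·(1 − 1/k)^{i-1}·V` for all `0 ≤ i ≤ k`. -/
theorem recurrence_bound (k : ℕ) (hk : 1 ≤ k) (V : ℝ) (hV : 0 ≤ V)
    (e : ℕ → ℝ) (h0 : 0 ≤ e 0)
    (hrec : ∀ i : ℕ, 1 ≤ i → i ≤ k →
      e i ≥ e (i - 1) + (1 / (k : ℝ)) * ((1 - 1 / (k : ℝ)) ^ (i - 1) * V - e (i - 1))) :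
    ∀ i : ℕ, i ≤ k → e i ≥ ((i : ℝ) / (k : ℝ)) * (1 - 1 / (k : ℝ)) ^ (i - 1) * V :=
  recurrence_bound_general k V e h0 hrec
end

section
/- Let k ≥ 1 be an integer, let ℓ ≥ 0 be a real number, let N be the disjoint union of finite sets O and Y each of size k, and let f : 2^N → ℝ be defined by f(S) = (|S ∩ O|/k)·(1 − |S ∩ Y|/k) + ( g(|S ∩ Y|/k) + ℓ·|S ∩ Y|/k² )·(1 − |S ∩ O|/k). Then f is submodular, i.e., f(A ∩ B) + f(A ∪ B) ≤ f(A) + f(B) for all A, B ⊆ N. -/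
/-!
With `x S = |S ∩ O| / k` and `y S = |S ∩ Y| / k`, both modular and monotone, the objective is
`f = x (1 - y) + H y (1 - x)` with `H y = g y + (l / k) y`. Since `g x = negMulLog (1 - x)` up to
the point where `negMulLog` attains its maximum `1 / e`, and constant afterwards, `g` and hence `H`
are concave and nondecreasing on `[0, 1]`. For such `H`, the defect
`f A + f B - f (A ∩ B) - f (A ∪ B)` expands into nonnegative terms: products of increments of `x`
and `y`, the concavity gap of `H` weighted by `1 - x (A ∩ B)`, and increments of `x` weighted by
increments of `H`.
-/

open Finset Real

theorem ConcaveOn.map_add_map_le_of_add_eq {s : Set ℝ} {G : ℝ → ℝ} (hG : ConcaveOn ℝ s G)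
    {p q r t : ℝ} (hp : p ∈ s) (ht : t ∈ s) (hpq : p ≤ q) (hpr : p ≤ r) (hsum : q + r = p + t) :
    G p + G t ≤ G q + G r := by
  rcases (show p ≤ t by linarith).eq_or_lt with rfl | hpt
  · obtain rfl : q = p := by linarith
    obtain rfl : r = q := by linarith
    rfl
  -- `q` and `r` are the mirror-image convex combinations of the endpoints `p` and `t`
  set a := (t - q) / (t - p)
  have hd : t - p ≠ 0 := by linarith
  have ha : 0 ≤ a := div_nonneg (by linarith) (by linarith)
  have ha' : 0 ≤ 1 - a := by
    rw [sub_nonneg, div_le_one (by linarith)]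
    linarith
  have hq := hG.2 hp ht ha ha' (add_sub_cancel a 1)
  have hr := hG.2 hp ht ha' ha (sub_add_cancel 1 a)
  rw [show a • p + (1 - a) • t = q by simp only [a, smul_eq_mul]; field_simp; ring] at hq
  rw [show (1 - a) • p + a • t = r by
    simp only [a, smul_eq_mul]; field_simp; linear_combination (p - t) * hsum] at hr
  simp only [smul_eq_mul] at hq hr
  linarith

theorem Real.antitoneOn_negMulLog : AntitoneOn negMulLog (Set.Ici (exp (-1))) := by
  refine antitoneOn_of_deriv_nonpos (convex_Ici _) continuous_negMulLog.continuousOn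
    (differentiableOn_negMulLog.mono ?_) fun x hx ↦ ?_
  · rw [interior_Ici]
    exact fun x hx ↦ (exp_pos _).trans hx |>.ne'
  · rw [interior_Ici] at hx
    have hx0 : 0 < x := (exp_pos _).trans hx
    rw [deriv_negMulLog hx0.ne']
    have : -1 < log x := by rwa [lt_log_iff_exp_lt hx0]
    linarith

theorem Real.concaveOn_negMulLog_max_one_sub :
    ConcaveOn ℝ Set.univ fun x ↦ negMulLog (max (1 - x) (exp (-1))) := by
  have hrange : (fun x : ℝ ↦ max (1 - x) (exp (-1))) '' Set.univ = Set.Ici (exp (-1)) := by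
    ext y
    refine ⟨fun ⟨x, _, hx⟩ ↦ hx ▸ le_max_right (1 - x) _, fun hy ↦ ⟨1 - y, trivial, ?_⟩⟩
    simpa using hy
  have hconvex : ConvexOn ℝ Set.univ fun x : ℝ ↦ max (1 - x) (exp (-1)) :=
    ((convexOn_const 1 convex_univ).sub (concaveOn_id convex_univ)).sup
      (convexOn_const _ convex_univ)
  have hconcave : ConcaveOn ℝ (Set.Ici (exp (-1))) negMulLog :=
    concaveOn_negMulLog.subset (Set.Ici_subset_Ici.2 (exp_pos _).le) (convex_Ici _)
  rw [← hrange] at hconcave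
  exact hconcave.comp_convexOn hconvex (hrange ▸ antitoneOn_negMulLog)

theorem Real.monotone_negMulLog_max_one_sub :
    Monotone fun x ↦ negMulLog (max (1 - x) (exp (-1))) := fun x y hxy ↦
  antitoneOn_negMulLog (le_max_right (1 - y) _) (le_max_right (1 - x) _)
    (max_le_max (by linarith) le_rfl)

theorem Real.eqOn_negMulLog_max_one_sub {g : ℝ → ℝ}
    (hg1 : ∀ x ∈ Set.Icc (0 : ℝ) (1 - 1 / exp 1), g x = (x - 1) * log (1 - x))
    (hg2 : ∀ x ∈ Set.Icc (1 - 1 / exp 1) (1 : ℝ), g x = 1 / exp 1) :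
    Set.EqOn g (fun x ↦ negMulLog (max (1 - x) (exp (-1)))) (Set.Icc 0 1) := by
  intro x hx
  simp only [exp_neg, ← one_div]
  rcases le_total x (1 - 1 / exp 1) with h | h
  · rw [hg1 x ⟨hx.1, h⟩, max_eq_left (by linarith), negMulLog]
    ring
  · rw [hg2 x ⟨h, hx.2⟩, max_eq_right (by linarith), negMulLog, one_div, log_inv, log_exp]
    ring

def blend (H : ℝ → ℝ) (x y : ℝ) : ℝ := x * (1 - y) + H y * (1 - x)

theorem blend_add_blend_le {s : Set ℝ} {H : ℝ → ℝ} (hH : ConcaveOn ℝ s H) (hHm : MonotoneOn H s)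
    {xi xa xb xu yi ya yb yu : ℝ} (hxi : xi ≤ 1) (hxa : xi ≤ xa) (hxb : xi ≤ xb)
    (hx : xi + xu = xa + xb) (hyi : yi ∈ s) (hyu : yu ∈ s) (hya : yi ≤ ya) (hyb : yi ≤ yb)
    (hy : yi + yu = ya + yb) :
    blend H xi yi + blend H xu yu ≤ blend H xa ya + blend H xb yb := by
  have hya_mem : ya ∈ s := hH.1.ordConnected.out hyi hyu ⟨hya, by linarith⟩
  have hyb_mem : yb ∈ s := hH.1.ordConnected.out hyi hyu ⟨hyb, by linarith⟩
  have hconcave : H yi + H yu ≤ H ya + H yb :=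
    hH.map_add_map_le_of_add_eq hyi hyu hya hyb hy.symm
  have hmono_a : H ya ≤ H yu := hHm hya_mem hyu (by linarith)
  have hmono_b : H yb ≤ H yu := hHm hyb_mem hyu (by linarith)
  obtain rfl : xu = xa + xb - xi := by linarith
  obtain rfl : yu = ya + yb - yi := by linarith
  have hdefect : blend H xa ya + blend H xb yb
      - (blend H xi yi + blend H (xa + xb - xi) (ya + yb - yi)) =
      (xa - xi) * (yb - yi) + (xb - xi) * (ya - yi)
        + (1 - xi) * (H ya + H yb - H yi - H (ya + yb - yi))
        + (xa - xi) * (H (ya + yb - yi) - H ya) + (xb - xi) * (H (ya + yb - yi) - H yb) := by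
    unfold blend; ring
  have := mul_nonneg (sub_nonneg.2 hxa) (sub_nonneg.2 hyb)
  have := mul_nonneg (sub_nonneg.2 hxb) (sub_nonneg.2 hya)
  have := mul_nonneg (sub_nonneg.2 hxi) (by linarith : 0 ≤ H ya + H yb - H yi - H (ya + yb - yi))
  have := mul_nonneg (sub_nonneg.2 hxa) (sub_nonneg.2 hmono_a)
  have := mul_nonneg (sub_nonneg.2 hxb) (sub_nonneg.2 hmono_b)
  linarith

section SetFunction

variable {N : Type*} [DecidableEq N]

theorem blend_inter_add_blend_union_le {s : Set ℝ} {H : ℝ → ℝ} (hH : ConcaveOn ℝ s H)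
    (hHm : MonotoneOn H s) {x y : Finset N → ℝ} (hx : ∀ A B, x (A ∩ B) + x (A ∪ B) = x A + x B)
    (hy : ∀ A B, y (A ∩ B) + y (A ∪ B) = y A + y B) (hxm : Monotone x) (hym : Monotone y)
    (hx1 : ∀ S, x S ≤ 1) (hys : ∀ S, y S ∈ s) (A B : Finset N) :
    blend H (x (A ∩ B)) (y (A ∩ B)) + blend H (x (A ∪ B)) (y (A ∪ B)) ≤
      blend H (x A) (y A) + blend H (x B) (y B) :=
  blend_add_blend_le hH hHm (hx1 _) (hxm inter_subset_left) (hxm inter_subset_right) (hx A B)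
    (hys _) (hys _) (hym inter_subset_left) (hym inter_subset_right) (hy A B)

theorem Finset.card_inter_inter_add_card_union_inter (A B T : Finset N) :
    #(A ∩ B ∩ T) + #((A ∪ B) ∩ T) = #(A ∩ T) + #(B ∩ T) := by
  rw [inter_inter_distrib_right, union_inter_distrib_right, card_inter_add_card_union]

theorem Finset.cast_card_inter_div_modular (T : Finset N) (c : ℝ) (A B : Finset N) :
    (#(A ∩ B ∩ T) : ℝ) / c + #((A ∪ B) ∩ T) / c = #(A ∩ T) / c + #(B ∩ T) / c := by
  rw [← add_div, ← add_div, ← Nat.cast_add, ← Nat.cast_add,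
    card_inter_inter_add_card_union_inter]

theorem Finset.monotone_cast_card_inter_div (T : Finset N) {c : ℝ} (hc : 0 ≤ c) :
    Monotone fun S : Finset N ↦ (#(S ∩ T) : ℝ) / c := fun _ _ hST ↦
  div_le_div_of_nonneg_right (by exact_mod_cast card_le_card (inter_subset_inter_right hST)) hc

theorem Finset.cast_card_inter_div_le_one {T : Finset N} {k : ℕ} (hT : #T = k) (S : Finset N) :
    (#(S ∩ T) : ℝ) / k ≤ 1 :=
  div_le_one_of_le₀ (by exact_mod_cast hT ▸ card_le_card inter_subset_right) k.cast_nonneg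

end SetFunction

theorem bad_instance_submodular_general {N : Type*} [DecidableEq N]
    (k : ℕ) (l : ℝ) (hl : 0 ≤ l)
    (O Y : Finset N)
    (hO : O.card = k) (hY : Y.card = k)
    (g : ℝ → ℝ)
    (hg1 : ∀ x ∈ Set.Icc (0 : ℝ) (1 - 1 / Real.exp 1),
      g x = (x - 1) * Real.log (1 - x))
    (hg2 : ∀ x ∈ Set.Icc (1 - 1 / Real.exp 1) (1 : ℝ), g x = 1 / Real.exp 1)
    (f : Finset N → ℝ)
    (hf : ∀ S : Finset N,
      f S = ((S ∩ O).card : ℝ) / k * (1 - ((S ∩ Y).card : ℝ) / k)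
        + (g (((S ∩ Y).card : ℝ) / k) + l * ((S ∩ Y).card : ℝ) / (k : ℝ) ^ 2)
          * (1 - ((S ∩ O).card : ℝ) / k)) :
    ∀ A B : Finset N, f (A ∩ B) + f (A ∪ B) ≤ f A + f B := by
  have hc : 0 ≤ l / k := by positivity
  have hg := eqOn_negMulLog_max_one_sub hg1 hg2
  have hH : ConcaveOn ℝ (Set.Icc 0 1) (g + fun y ↦ l / k * y) :=
    ((concaveOn_negMulLog_max_one_sub.subset (Set.subset_univ _) (convex_Icc 0 1)).congr
      hg.symm).add ((concaveOn_id (convex_Icc 0 1)).smul hc)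
  have hHm : MonotoneOn (g + fun y ↦ l / k * y) (Set.Icc 0 1) :=
    ((monotone_negMulLog_max_one_sub.monotoneOn _).congr hg.symm).add
      ((monotone_id.const_mul hc).monotoneOn _)
  have hf_blend : ∀ S, f S = blend (g + fun y ↦ l / k * y) (#(S ∩ O) / k) (#(S ∩ Y) / k) := by
    intro S
    rw [hf, blend, Pi.add_apply]
    ring
  intro A B
  simp only [hf_blend]
  exact blend_inter_add_blend_union_le hH hHm (cast_card_inter_div_modular O k)
    (cast_card_inter_div_modular Y k) (monotone_cast_card_inter_div O k.cast_nonneg)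
    (monotone_cast_card_inter_div Y k.cast_nonneg) (cast_card_inter_div_le_one hO)
    (fun S ↦ ⟨by positivity, cast_card_inter_div_le_one hY S⟩) A B

/-- The objective function of the bad instance is submodular. -/
theorem bad_instance_submodular {N : Type*} [Fintype N] [DecidableEq N]
    (k : ℕ) (hk : 1 ≤ k) (l : ℝ) (hl : 0 ≤ l)
    (O Y : Finset N) (hdisj : Disjoint O Y) (hunion : O ∪ Y = Finset.univ)
    (hO : O.card = k) (hY : Y.card = k)
    (g : ℝ → ℝ)
    (hg1 : ∀ x ∈ Set.Icc (0 : ℝ) (1 - 1 / Real.exp 1),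
      g x = (x - 1) * Real.log (1 - x))
    (hg2 : ∀ x ∈ Set.Icc (1 - 1 / Real.exp 1) (1 : ℝ), g x = 1 / Real.exp 1)
    (f : Finset N → ℝ)
    (hf : ∀ S : Finset N,
      f S = ((S ∩ O).card : ℝ) / k * (1 - ((S ∩ Y).card : ℝ) / k)
        + (g (((S ∩ Y).card : ℝ) / k) + l * ((S ∩ Y).card : ℝ) / (k : ℝ) ^ 2)
          * (1 - ((S ∩ O).card : ℝ) / k)) :
    ∀ A B : Finset N, f (A ∩ B) + f (A ∪ B) ≤ f A + f B :=
  bad_instance_submodular_general k l hl O Y hO hY g hg1 hg2 f hf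
end

section
/- Let k ≥ 1 be an integer, let ℓ ≥ 0 be a real number, let N be the disjoint union of finite sets O and Y each of size k, and let f : 2^N → ℝ be defined by f(S) = (|S ∩ O|/k)·(1 − |S ∩ Y|/k) + ( g(|S ∩ Y|/k) + ℓ·|S ∩ Y|/k² )·(1 − |S ∩ O|/k). Then f(O) = 1, while every set S ⊆ Y satisfies f(S) ≤ 1/e + ℓ/k. -/
open Real Set

lemma Real.negMulLog_le_one_div_exp_one {t : ℝ} (ht : 0 ≤ t) : negMulLog t ≤ 1 / exp 1 := by
  rcases ht.eq_or_lt with rfl | ht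
  · simp [(exp_pos 1).le]
  -- `e·y ≤ exp y` at `y = -log t`, then multiply by `t / e`
  have key : exp 1 * -log t ≤ t⁻¹ := by
    simpa [exp_neg, exp_log ht] using exp_one_mul_le_exp (x := -log t)
  rw [negMulLog, le_div_iff₀ (exp_pos 1)]
  calc -t * log t * exp 1 = t * (exp 1 * -log t) := by ring
    _ ≤ t * t⁻¹ := by gcongr
    _ = 1 := mul_inv_cancel₀ ht.ne'

lemma le_one_div_exp_one_of_capped_negMulLog {g : ℝ → ℝ}
    (hg1 : ∀ x ∈ Icc (0 : ℝ) (1 - 1 / exp 1), g x = (x - 1) * log (1 - x))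
    (hg2 : ∀ x ∈ Icc (1 - 1 / exp 1) (1 : ℝ), g x = 1 / exp 1)
    {x : ℝ} (hx : x ∈ Icc (0 : ℝ) 1) : g x ≤ 1 / exp 1 := by
  rcases le_total x (1 - 1 / exp 1) with hle | hge
  · have hpos : 0 ≤ 1 - x := by linarith [one_div_pos.mpr (exp_pos 1)]
    rw [hg1 x ⟨hx.1, hle⟩]
    simpa [negMulLog, neg_sub] using negMulLog_le_one_div_exp_one hpos
  · exact (hg2 x ⟨hge, hx.2⟩).le

theorem bad_instance_values_general {N : Type*} [DecidableEq N]
    (k : ℕ) (hk : 1 ≤ k) (l : ℝ) (hl : 0 ≤ l)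
    (O Y : Finset N) (hdisj : Disjoint O Y)
    (hO : O.card = k) (hY : Y.card = k)
    (g : ℝ → ℝ)
    (hg1 : ∀ x ∈ Set.Icc (0 : ℝ) (1 - 1 / Real.exp 1),
      g x = (x - 1) * Real.log (1 - x))
    (hg2 : ∀ x ∈ Set.Icc (1 - 1 / Real.exp 1) (1 : ℝ), g x = 1 / Real.exp 1)
    (f : Finset N → ℝ)
    (hf : ∀ S : Finset N,
      f S = ((S ∩ O).card : ℝ) / k * (1 - ((S ∩ Y).card : ℝ) / k)
        + (g (((S ∩ Y).card : ℝ) / k) + l * ((S ∩ Y).card : ℝ) / (k : ℝ) ^ 2)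
          * (1 - ((S ∩ O).card : ℝ) / k)) :
    f O = 1 ∧ ∀ S : Finset N, S ⊆ Y → f S ≤ 1 / Real.exp 1 + l / k := by
  have hk0 : (0 : ℝ) < k := by exact_mod_cast hk
  refine ⟨?_, fun S hS => ?_⟩
  · rw [hf, Finset.inter_self, Finset.disjoint_iff_inter_eq_empty.mp hdisj, hO]
    simp [hk0.ne']
  rw [hf, Finset.disjoint_iff_inter_eq_empty.mp (hdisj.symm.mono_left hS), Finset.inter_eq_left.mpr hS]
  have hx : (S.card : ℝ) / k ∈ Icc (0 : ℝ) 1 := by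
    refine ⟨by positivity, div_le_one_of_le₀ ?_ hk0.le⟩
    exact_mod_cast hY ▸ Finset.card_le_card hS
  have hlin : l * S.card / (k : ℝ) ^ 2 ≤ l / k :=
    calc l * S.card / (k : ℝ) ^ 2 = l / k * (S.card / k) := by ring
      _ ≤ l / k := mul_le_of_le_one_right (by positivity) hx.2
  simp only [Finset.card_empty, Nat.cast_zero, zero_div, zero_mul, zero_add, sub_zero, mul_one]
  linarith [le_one_div_exp_one_of_capped_negMulLog hg1 hg2 hx]

/-- For the bad instance, `f(O) = 1` while every subset `S ⊆ Y` has
`f(S) ≤ 1/e + ℓ/k`. -/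
theorem bad_instance_values {N : Type*} [Fintype N] [DecidableEq N]
    (k : ℕ) (hk : 1 ≤ k) (l : ℝ) (hl : 0 ≤ l)
    (O Y : Finset N) (hdisj : Disjoint O Y) (hunion : O ∪ Y = Finset.univ)
    (hO : O.card = k) (hY : Y.card = k)
    (g : ℝ → ℝ)
    (hg1 : ∀ x ∈ Set.Icc (0 : ℝ) (1 - 1 / Real.exp 1),
      g x = (x - 1) * Real.log (1 - x))
    (hg2 : ∀ x ∈ Set.Icc (1 - 1 / Real.exp 1) (1 : ℝ), g x = 1 / Real.exp 1)
    (f : Finset N → ℝ)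
    (hf : ∀ S : Finset N,
      f S = ((S ∩ O).card : ℝ) / k * (1 - ((S ∩ Y).card : ℝ) / k)
        + (g (((S ∩ Y).card : ℝ) / k) + l * ((S ∩ Y).card : ℝ) / (k : ℝ) ^ 2)
          * (1 - ((S ∩ O).card : ℝ) / k)) :
    f O = 1 ∧ ∀ S : Finset N, S ⊆ Y → f S ≤ 1 / Real.exp 1 + l / k :=
  bad_instance_values_general k hk l hl O Y hdisj hO hY g hg1 hg2 f hf
end
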